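/- arXiv:1505.06119 — 5 statements merged into one kernel-verified Lean document; each statement's English description precedes it below -/
import Mathlib

section
/- Elimination of the last d−l arguments (first step in the proof of Theorem 3.1): Let d ≥ 1, 1 ≤ l ≤ d and t > 0. Let x : [0,∞) → ℝ be a càdlàg function such that the sequence n ↦ Σ_{i=1}^{⌊nt⌋} (Δ_i^n x)² converges in ℝ as n → ∞. Let L : ℝ^d → ℝ be continuous and set H(x₁,…,x_d) := |x₁|²⋯|x_l|² L(x₁,…,x_d). Then n^{-(d-l)} Σ_{i ∈ B_t^n(d)} [ H(Δ_{i₁}^n x, …, Δ_{i_d}^n x) − H(Δ_{i₁}^n x, …, Δ_{i_l}^n x, 0, …, 0) ] → 0 as n → ∞. -/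
/-!
A convergent realized quadratic variation stays below some `A`, so every increment is at most
`√A` and `L` is bounded and uniformly continuous on the cube where all arguments live. After factoring out `∏_{j<l} (Δ_{i_j}^n x)²`, the difference of the two values of
`H` is at most `ε` when all trailing increments are below `δ`, and otherwise at most
`2 sup |L| · δ⁻² ∑_{j ≥ l} (Δ_{i_j}^n x)²`. Summing over the grid, the first bound contributes
`ε A^l ⌊nt⌋^{d-l}` and the second `O(⌊nt⌋^{d-l-1})`, which is `o(n^{d-l})`.
-/

open Filter Topology

/-- The `i`-th increment of `x` at observation frequency `n`:
`Δᵢⁿ x = x(i/n) − x((i−1)/n)`. -/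
noncomputable def incr (x : ℝ → ℝ) (n i : ℕ) : ℝ :=
  x ((i : ℝ) / n) - x (((i : ℝ) - 1) / n)

open Finset

namespace Finset

variable {ι β R : Type*} [Fintype ι] [DecidableEq ι]

theorem sum_piFinset_const_prod [CommSemiring R] (s : Finset β) (S : Finset ι) (f : β → R) :
    ∑ i ∈ Fintype.piFinset (fun _ : ι => s), ∏ j ∈ S, f (i j) =
      (∑ b ∈ s, f b) ^ #S * #s ^ #Sᶜ := by
  calc ∑ i ∈ Fintype.piFinset (fun _ : ι => s), ∏ j ∈ S, f (i j)
      = ∑ i ∈ Fintype.piFinset (fun _ : ι => s), ∏ j, if j ∈ S then f (i j) else 1 := by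
        simp only [prod_ite_mem, univ_inter]
    _ = ∏ j : ι, ∑ b ∈ s, if j ∈ S then f b else 1 :=
        (prod_univ_sum (fun _ : ι => s) fun j b => if j ∈ S then f b else 1).symm
    _ = ∏ j : ι, if j ∈ S then ∑ b ∈ s, f b else (#s : R) :=
        prod_congr rfl fun j _ => by split_ifs <;> simp
    _ = (∑ b ∈ s, f b) ^ #S * #s ^ #Sᶜ := by
        rw [prod_ite, prod_const, prod_const, filter_mem_eq_inter, univ_inter, ← compl_filter,
          filter_mem_eq_inter, univ_inter]

theorem sum_piFinset_const_prod_mul_sum_compl [CommSemiring R] (s : Finset β) (S : Finset ι)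
    (f : β → R) :
    ∑ i ∈ Fintype.piFinset (fun _ : ι => s), (∏ j ∈ S, f (i j)) * ∑ j ∈ Sᶜ, f (i j) =
      #Sᶜ * ((∑ b ∈ s, f b) ^ (#S + 1) * #s ^ (#Sᶜ - 1)) := by
  simp_rw [mul_sum]
  rw [sum_comm, ← nsmul_eq_mul, ← sum_const]
  refine sum_congr rfl fun j hj => ?_
  have hjS : j ∉ S := mem_compl.1 hj
  calc ∑ i ∈ Fintype.piFinset (fun _ : ι => s), (∏ k ∈ S, f (i k)) * f (i j)
      = ∑ i ∈ Fintype.piFinset (fun _ : ι => s), ∏ k ∈ insert j S, f (i k) :=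
        sum_congr rfl fun i _ => by rw [prod_insert hjS, mul_comm]
    _ = (∑ b ∈ s, f b) ^ (#S + 1) * #s ^ (#Sᶜ - 1) := by
        rw [sum_piFinset_const_prod, card_insert_of_notMem hjS, compl_insert,
          card_erase_of_mem hj]

end Finset

theorem abs_le_add_div_sq_mul_sum_sq {ι : Type*} (T : Finset ι) (y : ι → ℝ) {z ε δ M : ℝ}
    (hδ : 0 < δ) (hε : 0 ≤ ε) (hM : |z| ≤ M) (hsmall : (∀ j ∈ T, |y j| ≤ δ) → |z| ≤ ε) :
    |z| ≤ ε + M / δ ^ 2 * ∑ j ∈ T, y j ^ 2 := by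
  have hM0 : 0 ≤ M := (abs_nonneg z).trans hM
  by_cases h : ∀ j ∈ T, |y j| ≤ δ
  · have : 0 ≤ M / δ ^ 2 * ∑ j ∈ T, y j ^ 2 := by positivity
    linarith [hsmall h]
  · simp only [not_forall, not_le, exists_prop] at h
    obtain ⟨j, hj, hjδ⟩ := h
    have hsq : δ ^ 2 ≤ ∑ j ∈ T, y j ^ 2 :=
      (sq_le_sq' (by linarith [abs_nonneg (y j)]) hjδ.le |>.trans (sq_abs _).le).trans
        (single_le_sum (fun k _ => sq_nonneg (y k)) hj)
    have : M ≤ M / δ ^ 2 * ∑ j ∈ T, y j ^ 2 := by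
      rw [div_mul_eq_mul_div, le_div_iff₀ (by positivity)]
      exact mul_le_mul_of_nonneg_left hsq hM0
    linarith

theorem abs_sum_prod_sq_mul_le {ι β : Type*} [Fintype ι] [DecidableEq ι] (S : Finset ι)
    (s : Finset β) (a : β → ℝ) (g : (ι → β) → ℝ) {ε δ M : ℝ} (hδ : 0 < δ) (hε : 0 ≤ ε)
    (hM : ∀ i ∈ Fintype.piFinset (fun _ : ι => s), |g i| ≤ M)
    (hsmall : ∀ i ∈ Fintype.piFinset (fun _ : ι => s), (∀ j ∈ Sᶜ, |a (i j)| ≤ δ) → |g i| ≤ ε) :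
    |∑ i ∈ Fintype.piFinset (fun _ : ι => s), (∏ j ∈ S, a (i j) ^ 2) * g i| ≤
      ε * ((∑ b ∈ s, a b ^ 2) ^ #S * #s ^ #Sᶜ) +
        M / δ ^ 2 * (#Sᶜ * ((∑ b ∈ s, a b ^ 2) ^ (#S + 1) * #s ^ (#Sᶜ - 1))) := by
  set P : (ι → β) → ℝ := fun i => ∏ j ∈ S, a (i j) ^ 2
  have hP : ∀ i, 0 ≤ P i := fun i => prod_nonneg fun j _ => sq_nonneg _
  calc |∑ i ∈ Fintype.piFinset (fun _ : ι => s), P i * g i|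
      ≤ ∑ i ∈ Fintype.piFinset (fun _ : ι => s), P i * |g i| := by
        refine (abs_sum_le_sum_abs _ _).trans_eq (sum_congr rfl fun i _ => ?_)
        rw [abs_mul, abs_of_nonneg (hP i)]
    _ ≤ ∑ i ∈ Fintype.piFinset (fun _ : ι => s),
          P i * (ε + M / δ ^ 2 * ∑ j ∈ Sᶜ, a (i j) ^ 2) :=
        sum_le_sum fun i hi => mul_le_mul_of_nonneg_left
          (abs_le_add_div_sq_mul_sum_sq _ _ hδ hε (hM i hi) (hsmall i hi)) (hP i)
    _ = ε * ((∑ b ∈ s, a b ^ 2) ^ #S * #s ^ #Sᶜ) +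
          M / δ ^ 2 * (#Sᶜ * ((∑ b ∈ s, a b ^ 2) ^ (#S + 1) * #s ^ (#Sᶜ - 1))) := by
        rw [← sum_piFinset_const_prod, ← sum_piFinset_const_prod_mul_sum_compl, mul_sum, mul_sum,
          ← sum_add_distrib]
        exact sum_congr rfl fun i _ => by ring

theorem pow_div_pow_le {N n t : ℝ} (hN : 0 ≤ N) (hNt : N ≤ n * t) (hn : 0 < n) (m : ℕ) :
    N ^ m / n ^ m ≤ t ^ m := by
  rw [← div_pow]
  exact pow_le_pow_left₀ (by positivity) ((div_le_iff₀' hn).2 hNt) m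

theorem mul_pow_pred_div_pow_le {N n t : ℝ} (hN : 0 ≤ N) (hNt : N ≤ n * t) (hn : 0 < n)
    (m : ℕ) : m * N ^ (m - 1) / n ^ m ≤ m * t ^ (m - 1) / n := by
  cases m with
  | zero => simp
  | succ m =>
    rw [Nat.add_sub_cancel, pow_succ, mul_div_assoc, mul_div_assoc, ← div_div]
    gcongr
    exact pow_div_pow_le hN hNt hn m

theorem one_div_pow_mul_add_le {n t N Q A ε c : ℝ} (m k : ℕ) (hn : 0 < n) (hN0 : 0 ≤ N)
    (hN : N ≤ n * t) (hQ0 : 0 ≤ Q) (hQA : Q ≤ A) (hε : 0 ≤ ε) (hc : 0 ≤ c) :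
    1 / n ^ m * (ε * (Q ^ k * N ^ m) + c * (m * (Q ^ (k + 1) * N ^ (m - 1)))) ≤
      A ^ k * t ^ m * ε + c * A ^ (k + 1) * (m * t ^ (m - 1)) / n := by
  have hA0 : 0 ≤ A := hQ0.trans hQA
  calc _ = Q ^ k * (N ^ m / n ^ m) * ε + c * Q ^ (k + 1) * (m * N ^ (m - 1) / n ^ m) := by ring
    _ ≤ A ^ k * t ^ m * ε + c * A ^ (k + 1) * (m * t ^ (m - 1) / n) := by
      gcongr ?_ * ?_ * ε + c * ?_ * ?_
      · exact pow_le_pow_left₀ hQ0 hQA k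
      · exact pow_div_pow_le hN0 hN hn m
      · exact pow_le_pow_left₀ hQ0 hQA (k + 1)
      · exact mul_pow_pred_div_pow_le hN0 hN hn m
    _ = _ := by ring

theorem tendsto_zero_of_abs_le_mul_add_div {u : ℕ → ℝ} (K : ℝ)
    (h : ∀ ε > 0, ∃ C, ∀ n : ℕ, 0 < n → |u n| ≤ K * ε + C / n) :
    Tendsto u atTop (𝓝 0) := by
  rw [Metric.tendsto_nhds]
  intro ε hε
  obtain ⟨C, hC⟩ := h (ε / (2 * (|K| + 1))) (by positivity)
  have hK : K * (ε / (2 * (|K| + 1))) < ε / 2 := by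
    calc K * (ε / (2 * (|K| + 1))) ≤ |K| * (ε / (2 * (|K| + 1))) := by
          gcongr; exact le_abs_self K
      _ < (|K| + 1) * (ε / (2 * (|K| + 1))) := by gcongr; linarith
      _ = ε / 2 := by field_simp
  filter_upwards [(tendsto_const_div_atTop_nhds_zero_nat C).eventually (gt_mem_nhds (half_pos hε)),
    eventually_gt_atTop 0] with n hCn hn
  rw [Real.dist_eq, sub_zero]
  linarith [hC n hn]

theorem abs_sum_sub_truncation_le {ι β : Type*} [Fintype ι] [DecidableEq ι] (p : ι → Prop)
    [DecidablePred p] (s : Finset β) (a : β → ℝ) (L H : (ι → ℝ) → ℝ)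
    (hH : ∀ v, H v = (∏ j ∈ univ.filter p, |v j| ^ 2) * L v) {K ε δ M : ℝ} (hK : 0 ≤ K)
    (hδ : 0 < δ) (hε : 0 ≤ ε) (ha : ∀ b ∈ s, |a b| ≤ K)
    (hM : ∀ v ∈ Metric.closedBall 0 K, ‖L v‖ ≤ M)
    (hL : ∀ v ∈ Metric.closedBall 0 K, ∀ w ∈ Metric.closedBall 0 K, dist v w < δ →
      dist (L v) (L w) < ε) :
    |∑ i ∈ Fintype.piFinset (fun _ : ι => s),
        (H (fun j => a (i j)) - H (fun j => if p j then a (i j) else 0))| ≤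
      ε * ((∑ b ∈ s, a b ^ 2) ^ #(univ.filter p) * #s ^ #(univ.filter p)ᶜ) +
        2 * M / (δ / 2) ^ 2 * (#(univ.filter p)ᶜ *
          ((∑ b ∈ s, a b ^ 2) ^ (#(univ.filter p) + 1) * #s ^ (#(univ.filter p)ᶜ - 1))) := by
  set v : (ι → β) → ι → ℝ := fun i j => a (i j)
  set w : (ι → β) → ι → ℝ := fun i j => if p j then a (i j) else 0
  have hfactor : ∀ i, H (v i) - H (w i) =
      (∏ j ∈ univ.filter p, a (i j) ^ 2) * (L (v i) - L (w i)) := by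
    intro i
    have hv : ∏ j ∈ univ.filter p, |v i j| ^ 2 = ∏ j ∈ univ.filter p, a (i j) ^ 2 :=
      prod_congr rfl fun j _ => sq_abs _
    have hw : ∏ j ∈ univ.filter p, |w i j| ^ 2 = ∏ j ∈ univ.filter p, a (i j) ^ 2 :=
      prod_congr rfl fun j hj => by simp [w, (mem_filter.1 hj).2]
    rw [hH, hH, hv, hw, mul_sub]
  have hball : ∀ i ∈ Fintype.piFinset (fun _ : ι => s),
      v i ∈ Metric.closedBall 0 K ∧ w i ∈ Metric.closedBall 0 K := by
    intro i hi
    simp only [mem_closedBall_zero_iff, pi_norm_le_iff_of_nonneg hK, Real.norm_eq_abs]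
    refine ⟨fun j => ha _ (Fintype.mem_piFinset.1 hi j), fun j => ?_⟩
    by_cases hj : p j
    · simpa [w, hj] using ha _ (Fintype.mem_piFinset.1 hi j)
    · simpa [w, hj] using hK
  rw [sum_congr rfl fun i _ => hfactor i]
  refine abs_sum_prod_sq_mul_le _ s a _ (half_pos hδ) hε (fun i hi => ?_) (fun i hi hsmall => ?_)
  · obtain ⟨hv, hw⟩ := hball i hi
    calc |L (v i) - L (w i)| ≤ |L (v i)| + |L (w i)| := abs_sub _ _
      _ ≤ 2 * M := by
        linarith [hM _ hv, hM _ hw, Real.norm_eq_abs (L (v i)), Real.norm_eq_abs (L (w i))]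
  · obtain ⟨hv, hw⟩ := hball i hi
    have hdist : dist (v i) (w i) ≤ δ / 2 := by
      refine (dist_pi_le_iff (half_pos hδ).le).2 fun j => ?_
      by_cases hj : p j
      · simpa [v, w, hj] using (half_pos hδ).le
      · simpa [v, w, hj, Real.dist_eq] using hsmall j (by simpa using hj)
    exact (Real.dist_eq _ _ ▸ hL _ hv _ hw (by linarith)).le

theorem stmt1_general
    (d l : ℕ)
    (t : ℝ) (ht : 0 < t)
    (x : ℝ → ℝ)
    -- the realized quadratic variation converges
    (hQV : ∃ Q : ℝ, Filter.Tendsto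
      (fun n : ℕ => ∑ i ∈ Finset.Icc 1 (Nat.floor ((n : ℝ) * t)), (incr x n i) ^ 2)
      Filter.atTop (nhds Q))
    (L : (Fin d → ℝ) → ℝ) (hL : Continuous L)
    (H : (Fin d → ℝ) → ℝ)
    (hH : ∀ v, H v =
      (∏ i ∈ Finset.univ.filter (fun i : Fin d => (i : ℕ) < l), |v i| ^ 2) * L v) :
    Filter.Tendsto (fun n : ℕ =>
      (1 / (n : ℝ) ^ (d - l)) *
        ∑ i ∈ Fintype.piFinset (fun _ : Fin d => Finset.Icc 1 (Nat.floor ((n : ℝ) * t))),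
          (H (fun j : Fin d => incr x n (i j)) -
           H (fun j : Fin d => if (j : ℕ) < l then incr x n (i j) else 0)))
      Filter.atTop (nhds 0) := by
  set S : Finset (Fin d) := univ.filter fun j => (j : ℕ) < l
  have hcard : #Sᶜ = d - l := by
    rw [card_compl, Fintype.card_fin, Fin.card_filter_val_lt]
    omega
  obtain ⟨A, hA⟩ : ∃ A, ∀ n : ℕ, ∑ i ∈ Icc 1 ⌊(n : ℝ) * t⌋₊, incr x n i ^ 2 ≤ A := by
    obtain ⟨Q, hQ⟩ := hQV
    obtain ⟨A, hA⟩ := hQ.bddAbove_range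
    exact ⟨A, fun n => hA ⟨n, rfl⟩⟩
  have hincr : ∀ n : ℕ, ∀ i ∈ Icc 1 ⌊(n : ℝ) * t⌋₊, |incr x n i| ≤ √A := fun n i hi =>
    Real.abs_le_sqrt ((single_le_sum (fun j _ => sq_nonneg (incr x n j)) hi).trans (hA n))
  have hB := isCompact_closedBall (0 : Fin d → ℝ) √A
  obtain ⟨M, hM⟩ := hB.exists_bound_of_continuousOn hL.continuousOn
  have hM0 : 0 ≤ M := (norm_nonneg _).trans (hM 0 (Metric.mem_closedBall_self (Real.sqrt_nonneg A)))
  have huc :=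
    Metric.uniformContinuousOn_iff.1 (hB.uniformContinuousOn_of_continuous hL.continuousOn)
  refine tendsto_zero_of_abs_le_mul_add_div (A ^ #S * t ^ (d - l)) fun ε hε => ?_
  obtain ⟨δ, hδ, hLδ⟩ := huc ε hε
  refine ⟨2 * M / (δ / 2) ^ 2 * A ^ (#S + 1) * ((d - l : ℕ) * t ^ (d - l - 1)), fun n hn => ?_⟩
  have hest := abs_sum_sub_truncation_le (fun j : Fin d => (j : ℕ) < l) _ (incr x n) L H hH
    (Real.sqrt_nonneg A) hδ hε.le (hincr n) hM hLδ
  rw [hcard, Nat.card_Icc, Nat.add_sub_cancel] at hest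
  rw [abs_mul, abs_of_nonneg (by positivity)]
  refine (mul_le_mul_of_nonneg_left hest (by positivity)).trans ?_
  convert one_div_pow_mul_add_le (d - l) #S (Nat.cast_pos.2 hn) (Nat.cast_nonneg _)
    (Nat.floor_le (by positivity)) (sum_nonneg fun i _ => sq_nonneg _) (hA n) hε.le
    (by positivity : 0 ≤ 2 * M / (δ / 2) ^ 2) using 1

/-- **Elimination of the last `d − l` arguments** (first step in the proof of Theorem 3.1). -/
theorem stmt1
    (d l : ℕ) (hd : 1 ≤ d) (hl1 : 1 ≤ l) (hld : l ≤ d)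
    (t : ℝ) (ht : 0 < t)
    (x : ℝ → ℝ)
    -- `x` is càdlàg: right-continuous on `[0,∞)` with left limits at every `s > 0`
    (hx_rc : ∀ s : ℝ, 0 ≤ s → ContinuousWithinAt x (Set.Ici s) s)
    (hx_ll : ∀ s : ℝ, 0 < s → ∃ c : ℝ, Filter.Tendsto x (nhdsWithin s (Set.Iio s)) (nhds c))
    -- the realized quadratic variation converges
    (hQV : ∃ Q : ℝ, Filter.Tendsto
      (fun n : ℕ => ∑ i ∈ Finset.Icc 1 (Nat.floor ((n : ℝ) * t)), (incr x n i) ^ 2)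
      Filter.atTop (nhds Q))
    (L : (Fin d → ℝ) → ℝ) (hL : Continuous L)
    (H : (Fin d → ℝ) → ℝ)
    (hH : ∀ v, H v =
      (∏ i ∈ Finset.univ.filter (fun i : Fin d => (i : ℕ) < l), |v i| ^ 2) * L v) :
    Filter.Tendsto (fun n : ℕ =>
      (1 / (n : ℝ) ^ (d - l)) *
        ∑ i ∈ Fintype.piFinset (fun _ : Fin d => Finset.Icc 1 (Nat.floor ((n : ℝ) * t))),
          (H (fun j : Fin d => incr x n (i j)) -
           H (fun j : Fin d => if (j : ℕ) < l then incr x n (i j) else 0)))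
      Filter.atTop (nhds 0) :=
  stmt1_general d l t ht x hQV L hL H hH
end

section
/- Small-increment property of càdlàg functions: Let T > 0 and let x : [0,∞) → ℝ be càdlàg. For every ε > 0 there exists N ∈ ℕ such that for all n ≥ N and all i ∈ {1,…,⌊nT⌋}: if |Δx_s| ≤ ε for every s ∈ ((i−1)/n, i/n], then |x(i/n) − x((i−1)/n)| < 2ε. -/
/-!
Right-continuity at `t` and the left limit at `t` give a neighbourhood of `t` on which `x` stays
within `ε / 2` of `x t` to the right of `t` and of `x (t-)` to its left. A Lebesgue number for these
neighbourhoods of the points of the compact interval `[0, T]` makes every short enough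
`[a, b] ⊆ [0, T]` lie in one of them, so `|x b - x a| < ε / 2 + |Δx_t| + ε / 2 ≤ 2ε`, where the
jump at `t` only enters when `t ∈ (a, b]`.
-/

open Filter Topology Set

section Cadlag

variable {x xm : ℝ → ℝ}

lemma eventually_abs_sub_lt_right_left_values {t η : ℝ} (hrc : ContinuousWithinAt x (Ici t) t)
    (hll : 0 < t → Tendsto x (𝓝[<] t) (𝓝 (xm t))) (hη : 0 < η) :
    ∀ᶠ s in 𝓝 t, 0 ≤ s → (t ≤ s → |x s - x t| < η) ∧ (s < t → |x s - xm t| < η) := by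
  have hright : ∀ᶠ s in 𝓝 t, t ≤ s → |x s - x t| < η :=
    eventually_nhdsWithin_iff.mp (Metric.tendsto_nhds.mp hrc η hη)
  rcases lt_or_ge 0 t with ht | ht
  · have hleft : ∀ᶠ s in 𝓝 t, s < t → |x s - xm t| < η :=
      eventually_nhdsWithin_iff.mp (Metric.tendsto_nhds.mp (hll ht) η hη)
    filter_upwards [hright, hleft] with s hs_right hs_left _ using ⟨hs_right, hs_left⟩
  · filter_upwards [hright] with s hs_right hs using ⟨hs_right, fun hst => by linarith⟩

lemma abs_sub_lt_of_near_one_sided_values {a b t ε : ℝ} (hab : a ≤ b)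
    (ha : (t ≤ a → |x a - x t| < ε / 2) ∧ (a < t → |x a - xm t| < ε / 2))
    (hb : (t ≤ b → |x b - x t| < ε / 2) ∧ (b < t → |x b - xm t| < ε / 2))
    (hjump : a < t → t ≤ b → |x t - xm t| ≤ ε) :
    |x b - x a| < 2 * ε := by
  rcases le_or_gt t a with hta | hat
  · have := abs_sub_le (x b) (x t) (x a)
    have := abs_sub_comm (x t) (x a)
    linarith [ha.1 hta, hb.1 (hta.trans hab), abs_nonneg (x a - x t)]
  rcases lt_or_ge b t with hbt | htb
  · have := abs_sub_le (x b) (xm t) (x a)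
    have := abs_sub_comm (xm t) (x a)
    linarith [ha.2 hat, hb.2 hbt, abs_nonneg (x a - xm t)]
  · have := abs_sub_le (x b) (x t) (x a)
    have := abs_sub_le (x t) (xm t) (x a)
    have := abs_sub_comm (xm t) (x a)
    linarith [ha.2 hat, hb.1 htb, hjump hat htb]

theorem exists_pos_abs_sub_lt_of_abs_jump_le {T ε : ℝ}
    (hrc : ∀ s : ℝ, 0 ≤ s → ContinuousWithinAt x (Ici s) s)
    (hll : ∀ s : ℝ, 0 < s → Tendsto x (𝓝[<] s) (𝓝 (xm s))) (hε : 0 < ε) :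
    ∃ δ > 0, ∀ a b, 0 ≤ a → a ≤ b → b ≤ T → b - a < δ →
      (∀ s ∈ Ioc a b, |x s - xm s| ≤ ε) → |x b - x a| < 2 * ε := by
  obtain ⟨V, hV, hcover⟩ := lebesgue_number_lemma_nhds (isCompact_Icc (a := 0) (b := T))
    fun t ht => eventually_abs_sub_lt_right_left_values (hrc t ht.1) (hll t) (half_pos hε)
  obtain ⟨δ, hδ, hδV⟩ := Metric.mem_uniformity_dist.mp hV
  refine ⟨δ, hδ, fun a b ha hab hbT hba hjumps => ?_⟩
  obtain ⟨t, ht⟩ := hcover b ⟨ha.trans hab, hbT⟩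
  have hb_mem : b ∈ UniformSpace.ball b V := hδV (by simpa using hδ)
  have ha_mem : a ∈ UniformSpace.ball b V := hδV <| by
    rw [Real.dist_eq, abs_sub_lt_iff]; constructor <;> linarith
  exact abs_sub_lt_of_near_one_sided_values hab (ht ha_mem ha) (ht hb_mem (ha.trans hab))
    fun hat htb => hjumps t ⟨hat, htb⟩

end Cadlag

theorem stmt2_general (T : ℝ) (x xm : ℝ → ℝ)
    (hx_rc : ∀ s : ℝ, 0 ≤ s → ContinuousWithinAt x (Set.Ici s) s)
    (hx_ll : ∀ s : ℝ, 0 < s → Filter.Tendsto x (nhdsWithin s (Set.Iio s)) (nhds (xm s)))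
    (ε : ℝ) (hε : 0 < ε) :
    ∃ N : ℕ, ∀ n : ℕ, N ≤ n → ∀ i : ℕ, 1 ≤ i → i ≤ Nat.floor ((n : ℝ) * T) →
      (∀ s ∈ Set.Ioc (((i : ℝ) - 1) / n) ((i : ℝ) / n), |x s - xm s| ≤ ε) →
      |x ((i : ℝ) / n) - x (((i : ℝ) - 1) / n)| < 2 * ε := by
  obtain ⟨δ, hδ, hsmall⟩ := exists_pos_abs_sub_lt_of_abs_jump_le hx_rc hx_ll hε
  obtain ⟨N, hN⟩ := exists_nat_one_div_lt hδ
  refine ⟨N + 1, fun n hn i hi hiT => ?_⟩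
  have hn' : (N : ℝ) + 1 ≤ n := by exact_mod_cast hn
  refine hsmall _ _ ?_ ?_ ?_ ?_
  · have : (1 : ℝ) ≤ i := by exact_mod_cast hi
    exact div_nonneg (by linarith) n.cast_nonneg
  · gcongr; linarith
  · have : (i : ℝ) ≤ n * T := (Nat.le_floor_iff' (by omega)).mp hiT
    rw [div_le_iff₀ (by linarith)]
    linarith
  · calc (i : ℝ) / n - (i - 1) / n = 1 / n := by ring
      _ ≤ 1 / (N + 1) := by gcongr
      _ < δ := hN

/-- **Small-increment property of càdlàg functions**: if `x` has no jump of size `> ε` on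
`((i−1)/n, i/n]`, then for `n` large (uniformly in `i ≤ ⌊nT⌋`) the increment of `x` over
this interval is smaller than `2ε`. Here `xm` is the left-limit function of `x`, so that
the jump of `x` at `s` is `x s − xm s`. -/
theorem stmt2 (T : ℝ) (hT : 0 < T) (x xm : ℝ → ℝ)
    (hx_rc : ∀ s : ℝ, 0 ≤ s → ContinuousWithinAt x (Set.Ici s) s)
    (hx_ll : ∀ s : ℝ, 0 < s → Filter.Tendsto x (nhdsWithin s (Set.Iio s)) (nhds (xm s)))
    (ε : ℝ) (hε : 0 < ε) :
    ∃ N : ℕ, ∀ n : ℕ, N ≤ n → ∀ i : ℕ, 1 ≤ i → i ≤ Nat.floor ((n : ℝ) * T) →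
      (∀ s ∈ Set.Ioc (((i : ℝ) - 1) / n) ((i : ℝ) / n), |x s - xm s| ≤ ε) →
      |x ((i : ℝ) / n) - x (((i : ℝ) - 1) / n)| < 2 * ε :=
  stmt2_general T x xm hx_rc hx_ll ε hε
end

section
/- Iterated fundamental theorem of calculus (Lemma 3.7): Let d ≥ 1 and let f : ℝ^d → ℝ be d-times continuously differentiable. Then for every x = (x₁,…,x_d) ∈ ℝ^d, f(x) = f(0) + Σ_{k=1}^{d} Σ_{1 ≤ i₁ < ⋯ < i_k ≤ d} ∫₀^{x_{i₁}} ⋯ ∫₀^{x_{i_k}} (∂_{i_k} ⋯ ∂_{i₁} f)(g_{i₁,…,i_k}(s₁,…,s_k)) ds_k ⋯ ds₁, where g_{i₁,…,i_k} : ℝ^k → ℝ^d is defined by (g_{i₁,…,i_k}(s₁,…,s_k))_j = s_m if j = i_m for some m ∈ {1,…,k} and 0 otherwise, and ∫₀^{a} denotes the oriented integral (equal to −∫_a^0 when a < 0). -/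
open Filter Topology intervalIntegral

/-- Iterated mixed partial derivative along a list of coordinate directions:
`mixedPartial [i₁, …, i_k] f = ∂_{i_k} ⋯ ∂_{i₁} f` (the head of the list is applied first,
i.e. is the innermost derivative). -/
noncomputable def mixedPartial {d : ℕ} : List (Fin d) → ((Fin d → ℝ) → ℝ) → ((Fin d → ℝ) → ℝ)
  | [], f => f
  | j :: rest, f => mixedPartial rest (fun v => fderiv ℝ f v (Pi.single j 1))

/-- Iterated oriented integral `∫₀^{x_{i₁}} ⋯ ∫₀^{x_{i_k}} F(g(s₁,…,s_k)) ds_k ⋯ ds₁`,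
where the integration variables are successively substituted into the environment `env`
(each unlisted coordinate keeps its value from `env`). -/
noncomputable def iterInt {d : ℕ} (x : Fin d → ℝ) (F : (Fin d → ℝ) → ℝ) :
    List (Fin d) → (Fin d → ℝ) → ℝ
  | [], env => F env
  | j :: rest, env => ∫ s in (0:ℝ)..(x j), iterInt x F rest (Function.update env j s)

lemma mixedPartial_contDiff {d : ℕ} : ∀ (L : List (Fin d)) (f : (Fin d → ℝ) → ℝ) (n : ℕ),
    ContDiff ℝ ((n + L.length : ℕ) : ℕ∞) f → ContDiff ℝ (n : ℕ∞) (mixedPartial L f)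
  | [], f, n, hf => by simpa [mixedPartial] using hf
  | j :: rest, f, n, hf => by
    apply mixedPartial_contDiff rest _ n
    have hf' : ContDiff ℝ (((n + rest.length : ℕ) : ℕ∞) + 1) f := by
      exact_mod_cast hf
    exact (hf'.fderiv_right le_rfl).clm_apply contDiff_const

lemma mixedPartial_continuous {d : ℕ} (L : List (Fin d)) (f : (Fin d → ℝ) → ℝ)
    (hf : ContDiff ℝ ((L.length : ℕ) : ℕ∞) f) : Continuous (mixedPartial L f) :=
  (mixedPartial_contDiff L f 0 (by simpa using hf)).continuous

lemma iterInt_continuous {d : ℕ} (x : Fin d → ℝ) (F : (Fin d → ℝ) → ℝ) (hF : Continuous F) :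
    ∀ L : List (Fin d), Continuous fun env => iterInt x F L env
  | [] => hF
  | j :: rest => by
    have ih := iterInt_continuous x F hF rest
    show Continuous fun env => ∫ s in (0:ℝ)..(x j), iterInt x F rest (Function.update env j s)
    apply intervalIntegral.continuous_parametric_intervalIntegral_of_continuous
      (μ := MeasureTheory.volume) ?_ continuous_const
    exact ih.comp (continuous_fst.update j continuous_snd)

lemma key {d : ℕ} (x : Fin d → ℝ) (A : Finset (Fin d)) :
    ∀ (f : (Fin d → ℝ) → ℝ), ContDiff ℝ ((A.card : ℕ) : ℕ∞) f →
    ∀ env : Fin d → ℝ, (∀ i ∈ A, env i = 0) →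
    f (fun i => if i ∈ A then x i else env i) =
      ∑ S ∈ A.powerset, iterInt x (mixedPartial (S.sort (· ≤ ·)) f) (S.sort (· ≤ ·)) env := by
  induction A using Finset.induction_on_min with
  | empty =>
    intro f hf env henv
    simp [iterInt, mixedPartial]
  | insert j A hjA ih =>
    intro f hf env henv
    have hj : j ∉ A := fun h => lt_irrefl j (hjA j h)
    have hcard : (insert j A).card = A.card + 1 := Finset.card_insert_of_notMem hj
    set g : (Fin d → ℝ) → ℝ := fun v => fderiv ℝ f v (Pi.single j 1) with hgdef
    have hf1 : ContDiff ℝ (((A.card : ℕ) : ℕ∞) + 1) f := by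
      convert hf using 1; rw [hcard]; push_cast; ring
    have hg : ContDiff ℝ ((A.card : ℕ) : ℕ∞) g :=
      (hf1.fderiv_right le_rfl).clm_apply contDiff_const
    have hfA : ContDiff ℝ ((A.card : ℕ) : ℕ∞) f :=
      hf1.of_le (le_self_add)
    set w : Fin d → ℝ := fun i => if i ∈ A then x i else env i with hw
    have henvA : ∀ i ∈ A, env i = 0 := fun i hi => henv i (Finset.mem_insert_of_mem hi)
    have henvj : env j = 0 := henv j (Finset.mem_insert_self j A)
    -- sorted list of insert j T for T ⊆ A
    have hsort : ∀ T ∈ A.powerset, (insert j T).sort (· ≤ ·) = j :: T.sort (· ≤ ·) := by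
      intro T hT
      rw [Finset.mem_powerset] at hT
      exact Finset.sort_insert _ (fun b hb => (hjA b (hT hb)).le) (fun h => hj (hT h))
    rw [Finset.sum_powerset_insert hj]
    -- first sum
    have h1 : ∑ S ∈ A.powerset, iterInt x (mixedPartial (S.sort (· ≤ ·)) f) (S.sort (· ≤ ·)) env
        = f w := (ih f hfA env henvA).symm
    -- continuity of inner terms
    have hcontT : ∀ T ∈ A.powerset,
        Continuous fun env' => iterInt x (mixedPartial (T.sort (· ≤ ·)) g) (T.sort (· ≤ ·)) env' := by
      intro T hT
      rw [Finset.mem_powerset] at hT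
      apply iterInt_continuous
      apply mixedPartial_continuous
      apply hg.of_le
      rw [Finset.length_sort]
      exact_mod_cast Nat.cast_le.mpr (Finset.card_le_card hT)
    -- second sum
    have h2 : ∑ S ∈ A.powerset,
        iterInt x (mixedPartial ((insert j S).sort (· ≤ ·)) f) ((insert j S).sort (· ≤ ·)) env
        = ∫ s in (0:ℝ)..(x j), g (Function.update w j s) := by
      have hterm : ∀ T ∈ A.powerset,
          iterInt x (mixedPartial ((insert j T).sort (· ≤ ·)) f) ((insert j T).sort (· ≤ ·)) env
          = ∫ s in (0:ℝ)..(x j),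
              iterInt x (mixedPartial (T.sort (· ≤ ·)) g) (T.sort (· ≤ ·))
                (Function.update env j s) := by
        intro T hT
        rw [hsort T hT]
        rfl
      rw [Finset.sum_congr rfl hterm]
      rw [← intervalIntegral.integral_finset_sum]
      · congr 1
        ext s
        have := (ih g hg (Function.update env j s) (fun i hi => by
          rw [Function.update_of_ne (fun h : i = j => hj (h ▸ hi))]
          exact henvA i hi)).symm
        rw [this]
        congr 1
        funext i
        by_cases hiA : i ∈ A
        · have : i ≠ j := fun h => hj (h ▸ hiA)
          simp [hiA, Function.update_of_ne this, hw]
        · by_cases hij : i = j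
          · subst hij; simp [hiA, hw]
          · simp [hiA, Function.update_of_ne hij, hw]
      · intro T hT
        exact ((hcontT T hT).comp (continuous_const.update j continuous_id)).intervalIntegrable _ _
    -- FTC
    have hdiff : Differentiable ℝ f := hf1.differentiable (by simp)
    have hftc : ∫ s in (0:ℝ)..(x j), g (Function.update w j s)
        = f (Function.update w j (x j)) - f (Function.update w j 0) := by
      apply intervalIntegral.integral_eq_sub_of_hasDerivAt
        (f := fun s => f (Function.update w j s))
      · intro s hs
        have hpath : HasDerivAt (fun s : ℝ => Function.update w j s) (Pi.single j 1) s := by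
          have : (fun s : ℝ => Function.update w j s)
              = fun s : ℝ => Function.update w j 0 + s • (Pi.single j 1 : Fin d → ℝ) := by
            funext s
            funext i
            by_cases hij : i = j
            · subst hij; simp
            · simp [Function.update_of_ne hij, Pi.single_eq_of_ne hij]
          rw [this]
          simpa using ((hasDerivAt_id s).smul_const (Pi.single j 1 : Fin d → ℝ)).const_add
            (Function.update w j 0)
        exact ((hdiff (Function.update w j s)).hasFDerivAt.comp_hasDerivAt s hpath)
      · exact ((hg.continuous).comp (continuous_const.update j continuous_id)).intervalIntegrable _ _
    have hW0 : Function.update w j 0 = w := by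
      funext i
      by_cases hij : i = j
      · subst hij; simp [hw, hj, henvj]
      · rw [Function.update_of_ne hij]
    have hWx : Function.update w j (x j) = fun i => if i ∈ insert j A then x i else env i := by
      funext i
      by_cases hij : i = j
      · subst hij; simp [hw]
      · rw [Function.update_of_ne hij]
        simp [hw, Finset.mem_insert, hij]
    rw [h1, h2, hftc, hW0, hWx]
    ring

/-- **Iterated fundamental theorem of calculus (Lemma 3.7)**: a `d`-times continuously
differentiable `f : ℝ^d → ℝ` equals `f(0)` plus the sum, over all nonempty increasing tuples
`1 ≤ i₁ < ⋯ < i_k ≤ d` of coordinates, of the iterated oriented integrals of the mixed partials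
`∂_{i_k} ⋯ ∂_{i₁} f` evaluated at the point which is `sₘ` in coordinate `iₘ` and `0` elsewhere. -/
theorem stmt3 (d : ℕ) (hd : 1 ≤ d) (f : (Fin d → ℝ) → ℝ) (hf : ContDiff ℝ (d : ℕ∞) f)
    (x : Fin d → ℝ) :
    f x = f (fun _ => 0) +
      ∑ k ∈ Finset.Icc 1 d,
        ∑ S ∈ Finset.univ.powerset.filter (fun S : Finset (Fin d) => S.card = k),
          iterInt x (mixedPartial (S.sort (· ≤ ·)) f) (S.sort (· ≤ ·)) (fun _ => 0) := by
  have hcard : (Finset.univ : Finset (Fin d)).card = d := by simp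
  have h := key x (Finset.univ : Finset (Fin d)) f (by rw [hcard]; exact hf)
    (fun _ => 0) (fun i _ => rfl)
  have hx : (fun i => if i ∈ (Finset.univ : Finset (Fin d)) then x i else (0:ℝ)) = x := by
    funext i; simp
  rw [hx] at h
  rw [h]
  rw [Finset.sum_powerset]
  rw [hcard]
  have hsplit : Finset.range (d + 1) = insert 0 (Finset.Icc 1 d) := by
    ext k; simp [Nat.lt_succ_iff]; omega
  rw [hsplit, Finset.sum_insert (by simp)]
  congr 1
  · simp [iterInt, mixedPartial]
  · apply Finset.sum_congr rfl
    intro k hk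
    apply Finset.sum_congr
    · rw [Finset.powersetCard_eq_filter]
    · intro S _; rfl
end

section
/- Second-order remainder estimates (inequalities (4.2) in the proof of Lemma 3.2): Let d ≥ 1, C > 0 and p > 3. Let g : ℝ × [−C,C]^{d−1} → ℝ be continuous and three times continuously differentiable in its first argument, with ∂₁ g, ∂²₁₁ g, ∂³₁₁₁ g jointly continuous on ℝ × [−C,C]^{d−1}. Define f(x,z) := |x|^p g(x,z), and for x, y ∈ ℝ, z ∈ [−C,C]^{d−1} set k(x,y,z) := f(x+y,z) − f(x,z) − f(y,z) and G(x,y,z) := k(x,y,z) − ∂₁ f(x,z) · y. Then there exist a constant K > 0 and a sequence (β_m)_{m≥1} with β_m → 0 such that for every m ≥ 1, all x with |x| ≤ 3/m, all y with |y| ≤ 1/m and all z ∈ [−C,C]^{d−1}: |k(x,y,z)| ≤ K β_m |x||y| and |G(x,y,z)| ≤ K β_m |x| |y|². -/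
/-!
Fix `z` and put `F u = |u| ^ p * g u z`. Since `p > 3`, `F` is three times differentiable with
`F 0 = F' 0 = 0`, and by the Leibniz rule `F''` and `F'''` are `O(|u| ^ (p - 3))` on `|u| ≤ 4`,
uniformly in `z`, because `g` and its derivatives are bounded on the compact set
`[-4, 4] × [-C, C]^(d-1)`. Both remainders are then iterated mean value estimates:
`t ↦ k(x, t)` vanishes at `0` and has derivative `F'(x + t) - F'(t) = O(|x| sup |F''|)`, and
`t ↦ G(x, t)` vanishes at `0` and has derivative the remainder `k` of `F'` itself, which is
`O(|x| |t| sup |F'''|)`. On `|u| ≤ 4 / m` the supremum is at most a constant times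
`β m = (4 / m) ^ (p - 3)`.
-/

open Set

theorem abs_le_of_mem_uIcc_zero {t y : ℝ} (h : t ∈ uIcc 0 y) : |t| ≤ |y| := by
  simpa using abs_sub_left_of_mem_uIcc h

theorem abs_le_mul_abs_of_hasDerivAt {φ φ' : ℝ → ℝ} {y L : ℝ}
    (hφ : ∀ t, HasDerivAt φ (φ' t) t) (h0 : φ 0 = 0) (hb : ∀ t ∈ uIcc 0 y, |φ' t| ≤ L) :
    |φ y| ≤ L * |y| := by
  simpa [h0] using (convex_uIcc 0 y).norm_image_sub_le_of_norm_hasDerivWithin_le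
    (fun t _ => (hφ t).hasDerivWithinAt) hb left_mem_uIcc right_mem_uIcc

theorem abs_add_sub_le_of_hasDerivAt {H H' : ℝ → ℝ} {R A a s : ℝ}
    (hH : ∀ u, HasDerivAt H (H' u) u) (hb : ∀ u, |u| ≤ R → |H' u| ≤ A) (has : |a| + |s| ≤ R) :
    |H (a + s) - H a| ≤ A * |s| :=
  abs_le_mul_abs_of_hasDerivAt (φ := fun σ => H (a + σ) - H a)
    (fun σ => ((hH (a + σ)).comp_const_add a σ).sub_const (H a)) (by simp)
    fun σ hσ => hb _ ((abs_add_le a σ).trans (by linarith [abs_le_of_mem_uIcc_zero hσ]))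

section Remainder

variable {F F₁ F₂ F₃ : ℝ → ℝ} {R A x y : ℝ}

theorem abs_add_sub_sub_le (hF : ∀ u, HasDerivAt F (F₁ u) u) (hF₁ : ∀ u, HasDerivAt F₁ (F₂ u) u)
    (hF0 : F 0 = 0) (hb : ∀ u, |u| ≤ R → |F₂ u| ≤ A) (hxy : |x| + |y| ≤ R) :
    |F (x + y) - F x - F y| ≤ A * |x| * |y| := by
  refine abs_le_mul_abs_of_hasDerivAt (φ := fun t => F (x + t) - F x - F t)
    (fun t => (((hF (x + t)).comp_const_add x t).sub_const (F x)).sub (hF t)) (by simp [hF0])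
    fun t ht => ?_
  rw [← add_comm t x]
  exact abs_add_sub_le_of_hasDerivAt hF₁ hb (by linarith [abs_le_of_mem_uIcc_zero ht])

theorem abs_add_sub_sub_sub_mul_le (hF : ∀ u, HasDerivAt F (F₁ u) u)
    (hF₁ : ∀ u, HasDerivAt F₁ (F₂ u) u) (hF₂ : ∀ u, HasDerivAt F₂ (F₃ u) u)
    (hF0 : F 0 = 0) (hF₁0 : F₁ 0 = 0) (hb : ∀ u, |u| ≤ R → |F₃ u| ≤ A) (hxy : |x| + |y| ≤ R) :
    |F (x + y) - F x - F y - F₁ x * y| ≤ A * |x| * |y| ^ 2 := by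
  have hA : 0 ≤ A :=
    (abs_nonneg _).trans (hb 0 (by rw [abs_zero]; linarith [abs_nonneg x, abs_nonneg y]))
  refine (abs_le_mul_abs_of_hasDerivAt (y := y) (L := A * |x| * |y|)
    (φ := fun t => F (x + t) - F x - F t - F₁ x * t)
    (fun t => ((((hF (x + t)).comp_const_add x t).sub_const (F x)).sub (hF t)).sub
      ((hasDerivAt_id' t).const_mul (F₁ x))) (by simp [hF0]) fun t ht => ?_).trans_eq (by ring)
  have ht := abs_le_of_mem_uIcc_zero ht
  rw [mul_one, sub_right_comm]
  exact (abs_add_sub_sub_le hF₁ hF₂ hF₁0 hb (by linarith)).trans (by gcongr)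

end Remainder

section Leibniz

variable {φ₀ φ₁ φ₂ φ₃ g₀ g₁ g₂ g₃ : ℝ → ℝ}

theorem hasDerivAt_leibniz_two (hφ₀ : ∀ u, HasDerivAt φ₀ (φ₁ u) u)
    (hφ₁ : ∀ u, HasDerivAt φ₁ (φ₂ u) u) (hg₀ : ∀ u, HasDerivAt g₀ (g₁ u) u)
    (hg₁ : ∀ u, HasDerivAt g₁ (g₂ u) u) (x : ℝ) :
    HasDerivAt (fun u => φ₁ u * g₀ u + φ₀ u * g₁ u)
      (φ₂ x * g₀ x + 2 * (φ₁ x * g₁ x) + φ₀ x * g₂ x) x :=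
  (((hφ₁ x).mul (hg₀ x)).add ((hφ₀ x).mul (hg₁ x))).congr_deriv (by ring)

theorem hasDerivAt_leibniz_three (hφ₀ : ∀ u, HasDerivAt φ₀ (φ₁ u) u)
    (hφ₁ : ∀ u, HasDerivAt φ₁ (φ₂ u) u) (hφ₂ : ∀ u, HasDerivAt φ₂ (φ₃ u) u)
    (hg₀ : ∀ u, HasDerivAt g₀ (g₁ u) u) (hg₁ : ∀ u, HasDerivAt g₁ (g₂ u) u)
    (hg₂ : ∀ u, HasDerivAt g₂ (g₃ u) u) (x : ℝ) :
    HasDerivAt (fun u => φ₂ u * g₀ u + 2 * (φ₁ u * g₁ u) + φ₀ u * g₂ u)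
      (φ₃ x * g₀ x + 3 * (φ₂ x * g₁ x) + 3 * (φ₁ x * g₂ x) + φ₀ x * g₃ x) x :=
  ((((hφ₂ x).mul (hg₀ x)).add (((hφ₁ x).mul (hg₁ x)).const_mul 2)).add
    ((hφ₀ x).mul (hg₂ x))).congr_deriv (by ring)

end Leibniz

-- `|φⱼ| ≤ Pʲ 4³⁻ʲ a`, so both Leibniz sums are dominated by the binomial expansion of `(P + 4)³ a`.
theorem abs_leibniz_le {P M a φ₀ φ₁ φ₂ φ₃ g₀ g₁ g₂ g₃ : ℝ} (hP : 0 ≤ P) (ha : 0 ≤ a)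
    (hφ₀ : |φ₀| ≤ 4 ^ 3 * a) (hφ₁ : |φ₁| ≤ P * 4 ^ 2 * a) (hφ₂ : |φ₂| ≤ P ^ 2 * 4 * a)
    (hφ₃ : |φ₃| ≤ P ^ 3 * a) (hg₀ : |g₀| ≤ M) (hg₁ : |g₁| ≤ M) (hg₂ : |g₂| ≤ M)
    (hg₃ : |g₃| ≤ M) :
    |φ₂ * g₀ + 2 * (φ₁ * g₁) + φ₀ * g₂| ≤ M * (P + 4) ^ 3 * a ∧
      |φ₃ * g₀ + 3 * (φ₂ * g₁) + 3 * (φ₁ * g₂) + φ₀ * g₃| ≤ M * (P + 4) ^ 3 * a := by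
  have hM : 0 ≤ M := (abs_nonneg _).trans hg₀
  have hmul : ∀ {φ g c : ℝ}, |φ| ≤ c → |g| ≤ M → |φ * g| ≤ M * c := fun hφ hg => by
    rw [abs_mul, mul_comm M]; exact mul_le_mul hφ hg (abs_nonneg _) ((abs_nonneg _).trans hφ)
  have hMa : 0 ≤ M * a := mul_nonneg hM ha
  constructor
  · calc _ ≤ |φ₂ * g₀| + 2 * |φ₁ * g₁| + |φ₀ * g₂| := by
          grw [abs_add_le, abs_add_le, abs_mul 2, abs_two]
      _ ≤ M * (P ^ 2 * 4 * a) + 2 * (M * (P * 4 ^ 2 * a)) + M * (4 ^ 3 * a) := by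
          gcongr <;> exact hmul ‹_› ‹_›
      _ ≤ M * (P + 4) ^ 3 * a := by nlinarith [mul_nonneg hMa (pow_nonneg hP 3)]
  · calc _ ≤ |φ₃ * g₀| + 3 * |φ₂ * g₁| + 3 * |φ₁ * g₂| + |φ₀ * g₃| := by
          grw [abs_add_le, abs_add_le, abs_add_le, abs_mul 3, abs_mul 3,
            abs_of_pos (show (0 : ℝ) < 3 by norm_num)]
      _ ≤ M * (P ^ 3 * a) + 3 * (M * (P ^ 2 * 4 * a)) + 3 * (M * (P * 4 ^ 2 * a))
          + M * (4 ^ 3 * a) := by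
          gcongr <;> exact hmul ‹_› ‹_›
      _ = M * (P + 4) ^ 3 * a := by ring

theorem rpow_add_natCast_le {u R a : ℝ} (n : ℕ) (hu : 0 ≤ u) (huR : u ≤ R) (h : a + n ≠ 0) :
    u ^ (a + n) ≤ R ^ n * u ^ a := by
  rw [Real.rpow_add_natCast' hu h, mul_comm]
  exact mul_le_mul_of_nonneg_right (pow_le_pow_left₀ hu huR n) (Real.rpow_nonneg hu a)

theorem hasDerivAt_abs_rpow_mul_self {q : ℝ} (hq : 1 < q) (u : ℝ) :
    HasDerivAt (fun v => |v| ^ q * v) ((q + 1) * |u| ^ q) u := by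
  have hsq : u * u * |u| ^ (q - 2) = |u| ^ q := by
    rw [← abs_mul_abs_self, ← pow_two, mul_comm, ← Real.rpow_add_natCast' (abs_nonneg u)
      (by norm_num; linarith)]
    norm_num
  exact ((hasDerivAt_abs_rpow u hq).mul (hasDerivAt_id' u)).congr_deriv
    (by linear_combination q * hsq)

theorem abs_rpow_derivs_le {p u : ℝ} (hp : 3 < p) (hu : |u| ≤ 4) :
    |(|u| ^ p)| ≤ 4 ^ 3 * |u| ^ (p - 3) ∧
      |p * (|u| ^ (p - 2) * u)| ≤ p * 4 ^ 2 * |u| ^ (p - 3) ∧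
      |p * (p - 1) * |u| ^ (p - 2)| ≤ p ^ 2 * 4 * |u| ^ (p - 3) ∧
      |p * (p - 1) * (p - 2) * (|u| ^ (p - 4) * u)| ≤ p ^ 3 * |u| ^ (p - 3) := by
  have hpow : ∀ (q : ℝ) (n : ℕ), q = p - 3 + n → |u| ^ q ≤ 4 ^ n * |u| ^ (p - 3) := by
    rintro q n rfl
    exact rpow_add_natCast_le n (abs_nonneg u) hu (by positivity)
  have habs : ∀ q : ℝ, 0 < q + 1 → |(|u| ^ q * u)| = |u| ^ (q + 1) := fun q hq => by
    rw [abs_mul, abs_of_nonneg (by positivity), Real.rpow_add_one' (abs_nonneg u) hq.ne']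
  have ha : 0 ≤ |u| ^ (p - 3) := by positivity
  refine ⟨?_, ?_, ?_, ?_⟩
  · rw [abs_of_nonneg (by positivity)]
    simpa using hpow p 3 (by norm_num)
  · rw [abs_mul, habs _ (by linarith), abs_of_pos (by linarith), mul_assoc]
    gcongr
    exact hpow _ 2 (by norm_num; ring)
  · rw [abs_mul, abs_of_pos (by nlinarith), abs_of_nonneg (by positivity), mul_assoc (p ^ 2)]
    exact mul_le_mul (by nlinarith) (by simpa using hpow _ 1 (by norm_num; ring))
      (by positivity) (sq_nonneg p)
  · have hp₃ : 0 < p * (p - 1) * (p - 2) :=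
      mul_pos (mul_pos (by linarith) (by linarith)) (by linarith)
    rw [abs_mul, habs _ (by linarith), abs_of_pos hp₃, show p - 4 + 1 = p - 3 by ring]
    exact mul_le_mul_of_nonneg_right (by nlinarith) ha

theorem abs_rpow_mul_remainder_le {p M r x y f₁ : ℝ} {g₀ g₁ g₂ g₃ : ℝ → ℝ} (hp : 3 < p)
    (hg₀ : ∀ u, HasDerivAt g₀ (g₁ u) u) (hg₁ : ∀ u, HasDerivAt g₁ (g₂ u) u)
    (hg₂ : ∀ u, HasDerivAt g₂ (g₃ u) u)
    (hM : ∀ u, |u| ≤ 4 → |g₀ u| ≤ M ∧ |g₁ u| ≤ M ∧ |g₂ u| ≤ M ∧ |g₃ u| ≤ M)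
    (hr : r ≤ 4) (hxy : |x| + |y| ≤ r) (hf₁ : HasDerivAt (fun u => |u| ^ p * g₀ u) f₁ x) :
    |(|x + y| ^ p * g₀ (x + y) - |x| ^ p * g₀ x - |y| ^ p * g₀ y)|
        ≤ M * (p + 4) ^ 3 * r ^ (p - 3) * |x| * |y| ∧
      |(|x + y| ^ p * g₀ (x + y) - |x| ^ p * g₀ x - |y| ^ p * g₀ y - f₁ * y)|
        ≤ M * (p + 4) ^ 3 * r ^ (p - 3) * |x| * |y| ^ 2 := by
  have hφ₀ : ∀ u, HasDerivAt (fun u => |u| ^ p) (p * (|u| ^ (p - 2) * u)) u := fun u =>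
    (hasDerivAt_abs_rpow u (by linarith)).congr_deriv (by ring)
  have hφ₁ : ∀ u, HasDerivAt (fun u => p * (|u| ^ (p - 2) * u)) (p * (p - 1) * |u| ^ (p - 2)) u :=
    fun u => ((hasDerivAt_abs_rpow_mul_self (by linarith) u).const_mul p).congr_deriv (by ring)
  have hφ₂ : ∀ u, HasDerivAt (fun u => p * (p - 1) * |u| ^ (p - 2))
      (p * (p - 1) * (p - 2) * (|u| ^ (p - 4) * u)) u := fun u =>
    ((hasDerivAt_abs_rpow u (by linarith)).const_mul (p * (p - 1))).congr_deriv
      (by rw [show p - 2 - 2 = p - 4 by ring]; ring)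
  have hF := fun u => (hφ₀ u).mul (hg₀ u)
  have hF₁ := hasDerivAt_leibniz_two hφ₀ hφ₁ hg₀ hg₁
  have hF₂ := hasDerivAt_leibniz_three hφ₀ hφ₁ hφ₂ hg₀ hg₁ hg₂
  have hK : 0 ≤ M * (p + 4) ^ 3 :=
    mul_nonneg ((abs_nonneg _).trans (hM 0 (by norm_num)).1) (pow_nonneg (by linarith) 3)
  have hb : ∀ u, |u| ≤ r →
      |p * (p - 1) * |u| ^ (p - 2) * g₀ u + 2 * (p * (|u| ^ (p - 2) * u) * g₁ u)
          + |u| ^ p * g₂ u| ≤ M * (p + 4) ^ 3 * r ^ (p - 3) ∧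
        |p * (p - 1) * (p - 2) * (|u| ^ (p - 4) * u) * g₀ u
          + 3 * (p * (p - 1) * |u| ^ (p - 2) * g₁ u) + 3 * (p * (|u| ^ (p - 2) * u) * g₂ u)
          + |u| ^ p * g₃ u| ≤ M * (p + 4) ^ 3 * r ^ (p - 3) := fun u hu => by
    have hu₄ := hu.trans hr
    obtain ⟨h₀, h₁, h₂, h₃⟩ := abs_rpow_derivs_le hp hu₄
    obtain ⟨hg₀, hg₁, hg₂, hg₃⟩ := hM u hu₄
    have hr : |u| ^ (p - 3) ≤ r ^ (p - 3) := Real.rpow_le_rpow (abs_nonneg u) hu (by linarith)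
    obtain ⟨hb₂, hb₃⟩ := abs_leibniz_le (by linarith) (by positivity) h₀ h₁ h₂ h₃ hg₀ hg₁ hg₂ hg₃
    exact ⟨hb₂.trans (mul_le_mul_of_nonneg_left hr hK),
      hb₃.trans (mul_le_mul_of_nonneg_left hr hK)⟩
  have hp₀ : p ≠ 0 := by linarith
  rw [hf₁.unique (hF x)]
  exact ⟨abs_add_sub_sub_le hF hF₁ (by simp [hp₀]) (fun u hu => (hb u hu).1) hxy,
    abs_add_sub_sub_sub_mul_le hF hF₁ hF₂ (by simp [hp₀]) (by simp [hp₀])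
      (fun u hu => (hb u hu).2) hxy⟩

theorem isCompact_setOf_forall_abs_le {ι : Type*} (C : ℝ) :
    IsCompact {z : ι → ℝ | ∀ i, |z i| ≤ C} := by
  simpa only [Set.pi, mem_univ, true_imp_iff, mem_Icc, ← abs_le] using
    isCompact_univ_pi fun _ : ι => isCompact_Icc (a := -C) (b := C)

theorem exists_pos_forall_abs_le_of_continuousOn {X : Type*} [TopologicalSpace X] {S : Set X}
    (hS : IsCompact S) {h : ℝ → X → ℝ}
    (hh : ContinuousOn (fun q : ℝ × X => h q.1 q.2) (univ ×ˢ S)) (R : ℝ) :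
    ∃ M, 0 < M ∧ ∀ u z, |u| ≤ R → z ∈ S → |h u z| ≤ M := by
  obtain ⟨M, hM⟩ := (isCompact_Icc.prod hS).exists_bound_of_continuousOn
    (hh.mono (prod_mono (subset_univ _) subset_rfl))
  exact ⟨max M 1, by positivity,
    fun u z hu hz => (hM (u, z) ⟨abs_le.mp hu, hz⟩).trans (le_max_left _ _)⟩

theorem stmt8_general (d : ℕ) (C p : ℝ) (hp : 3 < p)
    (g g₁ g₂ g₃ : ℝ → (Fin (d - 1) → ℝ) → ℝ)
    (hg_cont : ContinuousOn (fun q : ℝ × (Fin (d - 1) → ℝ) => g q.1 q.2)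
      (Set.univ ×ˢ {z | ∀ i, |z i| ≤ C}))
    (hg₁_cont : ContinuousOn (fun q : ℝ × (Fin (d - 1) → ℝ) => g₁ q.1 q.2)
      (Set.univ ×ˢ {z | ∀ i, |z i| ≤ C}))
    (hg₂_cont : ContinuousOn (fun q : ℝ × (Fin (d - 1) → ℝ) => g₂ q.1 q.2)
      (Set.univ ×ˢ {z | ∀ i, |z i| ≤ C}))
    (hg₃_cont : ContinuousOn (fun q : ℝ × (Fin (d - 1) → ℝ) => g₃ q.1 q.2)
      (Set.univ ×ˢ {z | ∀ i, |z i| ≤ C}))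
    (hg₁ : ∀ z : Fin (d - 1) → ℝ, (∀ i, |z i| ≤ C) → ∀ x : ℝ,
      HasDerivAt (fun u => g u z) (g₁ x z) x)
    (hg₂ : ∀ z : Fin (d - 1) → ℝ, (∀ i, |z i| ≤ C) → ∀ x : ℝ,
      HasDerivAt (fun u => g₁ u z) (g₂ x z) x)
    (hg₃ : ∀ z : Fin (d - 1) → ℝ, (∀ i, |z i| ≤ C) → ∀ x : ℝ,
      HasDerivAt (fun u => g₂ u z) (g₃ x z) x)
    (f f₁ : ℝ → (Fin (d - 1) → ℝ) → ℝ)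
    (hf : ∀ x z, f x z = |x| ^ p * g x z)
    (hf₁ : ∀ z : Fin (d - 1) → ℝ, (∀ i, |z i| ≤ C) → ∀ x : ℝ,
      HasDerivAt (fun u => f u z) (f₁ x z) x) :
    ∃ K : ℝ, 0 < K ∧ ∃ β : ℕ → ℝ, Filter.Tendsto β Filter.atTop (nhds 0) ∧
      ∀ m : ℕ, 1 ≤ m → ∀ x : ℝ, |x| ≤ 3 / (m : ℝ) → ∀ y : ℝ, |y| ≤ 1 / (m : ℝ) →
        ∀ z : Fin (d - 1) → ℝ, (∀ i, |z i| ≤ C) →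
          |f (x + y) z - f x z - f y z| ≤ K * β m * |x| * |y| ∧
          |f (x + y) z - f x z - f y z - f₁ x z * y| ≤ K * β m * |x| * |y| ^ 2 := by
  have hcube := isCompact_setOf_forall_abs_le (ι := Fin (d - 1)) C
  obtain ⟨M₀, hM₀, hgM₀⟩ := exists_pos_forall_abs_le_of_continuousOn hcube hg_cont 4
  obtain ⟨M₁, hM₁, hgM₁⟩ := exists_pos_forall_abs_le_of_continuousOn hcube hg₁_cont 4
  obtain ⟨M₂, hM₂, hgM₂⟩ := exists_pos_forall_abs_le_of_continuousOn hcube hg₂_cont 4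
  obtain ⟨M₃, hM₃, hgM₃⟩ := exists_pos_forall_abs_le_of_continuousOn hcube hg₃_cont 4
  refine ⟨(M₀ + M₁ + M₂ + M₃) * (p + 4) ^ 3,
    mul_pos (by positivity) (pow_pos (by linarith) 3),
    fun m => (4 / m) ^ (p - 3), ?_, fun m hm x hx y hy z hz => ?_⟩
  · simpa [Real.zero_rpow (by linarith : p - 3 ≠ 0)] using
      (tendsto_const_div_atTop_nhds_zero_nat (4 : ℝ)).rpow_const (p := p - 3) (.inr (by linarith))
  have hm : (1 : ℝ) ≤ m := by exact_mod_cast hm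
  simp only [hf]
  exact abs_rpow_mul_remainder_le hp (hg₁ z hz) (hg₂ z hz) (hg₃ z hz)
    (fun u hu => ⟨by linarith [hgM₀ u z hu hz], by linarith [hgM₁ u z hu hz],
      by linarith [hgM₂ u z hu hz], by linarith [hgM₃ u z hu hz]⟩)
    (div_le_self (by norm_num) hm) (by linarith [show 3 / (m : ℝ) + 1 / m = 4 / m by ring])
    (by simpa only [hf] using hf₁ z hz x)

/-- **Second-order remainder estimates (inequalities (4.2) in the proof of Lemma 3.2)**:
for `f(x,z) = |x|^p g(x,z)` with `p > 3` and `g` three times continuously differentiable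
in its first argument on `ℝ × [−C,C]^{d−1}`, setting
`k(x,y,z) = f(x+y,z) − f(x,z) − f(y,z)` and `G(x,y,z) = k(x,y,z) − ∂₁f(x,z)·y`,
there are `K > 0` and a sequence `β_m → 0` with
`|k| ≤ K β_m |x||y|` and `|G| ≤ K β_m |x| |y|²` for `|x| ≤ 3/m`, `|y| ≤ 1/m`,
`z ∈ [−C,C]^{d−1}`. Here `f₁ = ∂₁ f` is the first-argument derivative of `f`. -/
theorem stmt8 (d : ℕ) (hd : 1 ≤ d) (C p : ℝ) (hC : 0 < C) (hp : 3 < p)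
    (g g₁ g₂ g₃ : ℝ → (Fin (d - 1) → ℝ) → ℝ)
    (hg_cont : ContinuousOn (fun q : ℝ × (Fin (d - 1) → ℝ) => g q.1 q.2)
      (Set.univ ×ˢ {z | ∀ i, |z i| ≤ C}))
    (hg₁_cont : ContinuousOn (fun q : ℝ × (Fin (d - 1) → ℝ) => g₁ q.1 q.2)
      (Set.univ ×ˢ {z | ∀ i, |z i| ≤ C}))
    (hg₂_cont : ContinuousOn (fun q : ℝ × (Fin (d - 1) → ℝ) => g₂ q.1 q.2)
      (Set.univ ×ˢ {z | ∀ i, |z i| ≤ C}))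
    (hg₃_cont : ContinuousOn (fun q : ℝ × (Fin (d - 1) → ℝ) => g₃ q.1 q.2)
      (Set.univ ×ˢ {z | ∀ i, |z i| ≤ C}))
    (hg₁ : ∀ z : Fin (d - 1) → ℝ, (∀ i, |z i| ≤ C) → ∀ x : ℝ,
      HasDerivAt (fun u => g u z) (g₁ x z) x)
    (hg₂ : ∀ z : Fin (d - 1) → ℝ, (∀ i, |z i| ≤ C) → ∀ x : ℝ,
      HasDerivAt (fun u => g₁ u z) (g₂ x z) x)
    (hg₃ : ∀ z : Fin (d - 1) → ℝ, (∀ i, |z i| ≤ C) → ∀ x : ℝ,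
      HasDerivAt (fun u => g₂ u z) (g₃ x z) x)
    (f f₁ : ℝ → (Fin (d - 1) → ℝ) → ℝ)
    (hf : ∀ x z, f x z = |x| ^ p * g x z)
    (hf₁ : ∀ z : Fin (d - 1) → ℝ, (∀ i, |z i| ≤ C) → ∀ x : ℝ,
      HasDerivAt (fun u => f u z) (f₁ x z) x) :
    ∃ K : ℝ, 0 < K ∧ ∃ β : ℕ → ℝ, Filter.Tendsto β Filter.atTop (nhds 0) ∧
      ∀ m : ℕ, 1 ≤ m → ∀ x : ℝ, |x| ≤ 3 / (m : ℝ) → ∀ y : ℝ, |y| ≤ 1 / (m : ℝ) →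
        ∀ z : Fin (d - 1) → ℝ, (∀ i, |z i| ≤ C) →
          |f (x + y) z - f x z - f y z| ≤ K * β m * |x| * |y| ∧
          |f (x + y) z - f x z - f y z - f₁ x z * y| ≤ K * β m * |x| * |y| ^ 2 :=
  stmt8_general d C p hp g g₁ g₂ g₃ hg_cont hg₁_cont hg₂_cont hg₃_cont hg₁ hg₂ hg₃ f f₁ hf hf₁
end

section
/- Hölder-type increment bound for L (inequality (4.4) in the proof of Theorem 4.4): Let 1 ≤ l ≤ d be integers, let p₁,…,p_l ∈ (0,1) and γ₁,…,γ_l ≥ 0, and let u : ℝ^{d−l} → [0,∞) be continuous. Let L : ℝ^d → ℝ be continuously differentiable and satisfy, writing points of ℝ^d as (x,y) with x ∈ ℝ^l, y ∈ ℝ^{d−l}: |L(x,y)| ≤ u(y) and |∂_j L(x,y)| ≤ (1 + ‖x‖^{γ_j}) u(y) for all (x,y) and every j ∈ {1,…,l}, where ‖·‖ is the maximum norm. Then there exists a constant K > 0 such that for all x, z ∈ ℝ^l and all y ∈ ℝ^{d−l}: |L(x+z, y) − L(x, y)| ≤ K u(y) (1 + Σ_{i=1}^{l} ‖x‖^{γ_i})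 Σ_{j=1}^{l} |z_j|^{p_j}. -/
open Filter Topology

/-- Splice `x ∈ ℝ^l` and `y ∈ ℝ^{d−l}` into a point of `ℝ^d`. -/
def splice (d l : ℕ) (hld : l ≤ d) (x : Fin l → ℝ) (y : Fin (d - l) → ℝ) : Fin d → ℝ :=
  fun j => if h : (j : ℕ) < l then x ⟨j, h⟩
    else y ⟨(j : ℕ) - l, by have := j.isLt; omega⟩

lemma splice_add_smul (d l : ℕ) (hld : l ≤ d) (x z : Fin l → ℝ) (y : Fin (d - l) → ℝ)
    (t : ℝ) : splice d l hld x y + t • splice d l hld z 0 = splice d l hld (x + t • z) y := by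
  funext i
  simp only [splice, Pi.add_apply, Pi.smul_apply, smul_eq_mul]
  split_ifs with h
  · simp
  · simp

lemma splice_eq_sum (d l : ℕ) (hld : l ≤ d) (z : Fin l → ℝ) :
    splice d l hld z 0 = ∑ j : Fin l, z j • (Pi.single (Fin.castLE hld j) (1 : ℝ) : Fin d → ℝ) := by
  funext i
  simp only [splice, Finset.sum_apply, Pi.smul_apply, Pi.single_apply, smul_eq_mul]
  split_ifs with h
  · rw [Finset.sum_eq_single (⟨(i : ℕ), h⟩ : Fin l)]
    · simp [Fin.castLE, Fin.ext_iff]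
    · intro b _ hb
      have : ¬ (i = Fin.castLE hld b) := by
        intro hc
        apply hb
        simp [Fin.ext_iff, Fin.castLE] at hc ⊢
        omega
      simp [this]
    · simp
  · rw [Finset.sum_eq_zero]
    · simp
    · intro b _
      have : ¬ (i = Fin.castLE hld b) := by
        intro hc
        have := b.isLt
        simp [Fin.ext_iff, Fin.castLE] at hc
        omega
      simp [this]

/-- **Hölder-type increment bound for `L` (inequality (4.4) in the proof of Theorem 4.4)**:
if `|L(x,y)| ≤ u(y)` and `|∂ⱼL(x,y)| ≤ (1 + ‖x‖^{γⱼ}) u(y)` for `j ∈ {1,…,l}`, then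
`|L(x+z,y) − L(x,y)| ≤ K u(y) (1 + Σᵢ ‖x‖^{γᵢ}) Σⱼ |zⱼ|^{pⱼ}` for some constant `K > 0`.
The norm `‖·‖` on `ℝ^l` (a pi type) is the maximum norm. -/
theorem stmt9 (d l : ℕ) (hl : 1 ≤ l) (hld : l ≤ d)
    (p γ : Fin l → ℝ) (hp : ∀ j, p j ∈ Set.Ioo (0:ℝ) 1) (hγ : ∀ j, 0 ≤ γ j)
    (u : (Fin (d - l) → ℝ) → ℝ) (hu_cont : Continuous u) (hu_nonneg : ∀ y, 0 ≤ u y)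
    (L : (Fin d → ℝ) → ℝ) (hL : ContDiff ℝ 1 L)
    (hLbound : ∀ (x : Fin l → ℝ) (y : Fin (d - l) → ℝ), |L (splice d l hld x y)| ≤ u y)
    (hDbound : ∀ (x : Fin l → ℝ) (y : Fin (d - l) → ℝ) (j : Fin l),
      |fderiv ℝ L (splice d l hld x y) (Pi.single (Fin.castLE hld j) 1)| ≤
        (1 + ‖x‖ ^ γ j) * u y) :
    ∃ K : ℝ, 0 < K ∧ ∀ (x z : Fin l → ℝ) (y : Fin (d - l) → ℝ),
      |L (splice d l hld (x + z) y) - L (splice d l hld x y)| ≤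
        K * u y * (1 + ∑ i : Fin l, ‖x‖ ^ γ i) * ∑ j : Fin l, |z j| ^ p j := by
  set K : ℝ := 2 + ∑ j : Fin l, (2 : ℝ) ^ γ j with hK
  have hsum_pos : (0:ℝ) ≤ ∑ j : Fin l, (2 : ℝ) ^ γ j :=
    Finset.sum_nonneg fun j _ => (Real.rpow_pos_of_pos two_pos _).le
  have hK2 : (2:ℝ) ≤ K := by simp [hK]; linarith
  have hKpos : (0:ℝ) < K := by linarith
  refine ⟨K, hKpos, fun x z y => ?_⟩
  have hxsum : (0:ℝ) ≤ ∑ i : Fin l, ‖x‖ ^ γ i :=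
    Finset.sum_nonneg fun i _ => Real.rpow_nonneg (norm_nonneg x) _
  have hone_le : (1:ℝ) ≤ 1 + ∑ i : Fin l, ‖x‖ ^ γ i := by linarith
  by_cases hcase : ∃ j : Fin l, 1 ≤ |z j|
  · -- large increment: use the trivial bound |ΔL| ≤ 2 u y
    obtain ⟨j0, hj0⟩ := hcase
    have hS : (1:ℝ) ≤ ∑ j : Fin l, |z j| ^ p j := by
      calc (1:ℝ) ≤ |z j0| ^ p j0 := Real.one_le_rpow hj0 (hp j0).1.le
        _ ≤ ∑ j : Fin l, |z j| ^ p j :=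
          Finset.single_le_sum (fun j _ => Real.rpow_nonneg (abs_nonneg _) _) (Finset.mem_univ j0)
    have hlhs : |L (splice d l hld (x + z) y) - L (splice d l hld x y)| ≤ 2 * u y := by
      calc |L (splice d l hld (x + z) y) - L (splice d l hld x y)|
          ≤ |L (splice d l hld (x + z) y)| + |L (splice d l hld x y)| := abs_sub _ _
        _ ≤ u y + u y := add_le_add (hLbound _ _) (hLbound _ _)
        _ = 2 * u y := by ring
    calc |L (splice d l hld (x + z) y) - L (splice d l hld x y)| ≤ 2 * u y := hlhs
      _ = 2 * u y * 1 * 1 := by ring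
      _ ≤ K * u y * (1 + ∑ i : Fin l, ‖x‖ ^ γ i) * ∑ j : Fin l, |z j| ^ p j := by
          have h1 : 2 * u y ≤ K * u y := mul_le_mul_of_nonneg_right hK2 (hu_nonneg y)
          have h2 : 2 * u y * 1 ≤ K * u y * (1 + ∑ i : Fin l, ‖x‖ ^ γ i) := by
            rw [mul_one]
            calc 2 * u y ≤ K * u y := h1
              _ = K * u y * 1 := by ring
              _ ≤ K * u y * (1 + ∑ i : Fin l, ‖x‖ ^ γ i) :=
                mul_le_mul_of_nonneg_left hone_le (mul_nonneg hKpos.le (hu_nonneg y))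
          calc 2 * u y * 1 * 1 ≤ K * u y * (1 + ∑ i : Fin l, ‖x‖ ^ γ i) * 1 :=
                mul_le_mul_of_nonneg_right h2 zero_le_one
            _ ≤ K * u y * (1 + ∑ i : Fin l, ‖x‖ ^ γ i) * ∑ j : Fin l, |z j| ^ p j := by
                apply mul_le_mul_of_nonneg_left hS
                exact mul_nonneg (mul_nonneg hKpos.le (hu_nonneg y)) (by linarith)
  · -- small increment: mean value theorem
    push_neg at hcase
    set w : Fin d → ℝ := splice d l hld z 0 with hw
    set g : ℝ → ℝ := fun t => L (splice d l hld x y + t • w) with hg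
    have hLdiff : Differentiable ℝ L := hL.differentiable one_ne_zero
    have hderiv : ∀ t : ℝ,
        HasDerivAt g (fderiv ℝ L (splice d l hld x y + t • w) w) t := by
      intro t
      have h1 : HasDerivAt (fun t : ℝ => splice d l hld x y + t • w) w t := by
        simpa using ((hasDerivAt_id t).smul_const w).const_add (splice d l hld x y)
      exact (hLdiff _).hasFDerivAt.comp_hasDerivAt t h1
    -- bound the derivative uniformly
    have hznorm : ‖z‖ ≤ 1 := by
      rw [pi_norm_le_iff_of_nonneg zero_le_one]
      exact fun j => (hcase j).le
    set C : ℝ := ∑ j : Fin l, |z j| * ((1 + (‖x‖ + 1) ^ γ j) * u y) with hC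
    have hbound : ∀ t ∈ Set.Icc (0:ℝ) 1,
        |fderiv ℝ L (splice d l hld x y + t • w) w| ≤ C := by
      intro t ht
      rw [splice_add_smul d l hld x z y t]
      have hxt : ‖x + t • z‖ ≤ ‖x‖ + 1 := by
        calc ‖x + t • z‖ ≤ ‖x‖ + ‖t • z‖ := norm_add_le _ _
          _ = ‖x‖ + |t| * ‖z‖ := by rw [norm_smul, Real.norm_eq_abs]
          _ ≤ ‖x‖ + 1 * 1 := by
              have ht1 : |t| ≤ 1 := abs_le.2 ⟨by linarith [ht.1], ht.2⟩
              have := mul_le_mul ht1 hznorm (norm_nonneg z) zero_le_one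
              linarith
          _ = ‖x‖ + 1 := by ring
      have hwsum : w = ∑ j : Fin l, z j • (Pi.single (Fin.castLE hld j) (1 : ℝ) : Fin d → ℝ) :=
        splice_eq_sum d l hld z
      have : fderiv ℝ L (splice d l hld (x + t • z) y) w =
          ∑ j : Fin l, z j * fderiv ℝ L (splice d l hld (x + t • z) y)
            (Pi.single (Fin.castLE hld j) 1) := by
        rw [hwsum, map_sum]
        congr 1
        funext j
        rw [map_smul]
        rfl
      rw [this]
      calc |∑ j : Fin l, z j * fderiv ℝ L (splice d l hld (x + t • z) y)
              (Pi.single (Fin.castLE hld j) 1)|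
          ≤ ∑ j : Fin l, |z j * fderiv ℝ L (splice d l hld (x + t • z) y)
              (Pi.single (Fin.castLE hld j) 1)| := Finset.abs_sum_le_sum_abs _ _
        _ ≤ C := by
            rw [hC]
            apply Finset.sum_le_sum
            intro j _
            rw [abs_mul]
            apply mul_le_mul_of_nonneg_left _ (abs_nonneg _)
            calc |fderiv ℝ L (splice d l hld (x + t • z) y) (Pi.single (Fin.castLE hld j) 1)|
                ≤ (1 + ‖x + t • z‖ ^ γ j) * u y := hDbound _ _ j
              _ ≤ (1 + (‖x‖ + 1) ^ γ j) * u y := by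
                  apply mul_le_mul_of_nonneg_right _ (hu_nonneg y)
                  have := Real.rpow_le_rpow (norm_nonneg _) hxt (hγ j)
                  linarith
    have hMVT : |g 1 - g 0| ≤ C := by
      rw [← Real.norm_eq_abs]
      apply norm_image_sub_le_of_norm_deriv_le_segment_01'
        (f' := fun t => fderiv ℝ L (splice d l hld x y + t • w) w)
      · intro t ht
        exact (hderiv t).hasDerivWithinAt
      · intro t ht
        rw [Real.norm_eq_abs]
        exact hbound t (Set.Ico_subset_Icc_self ht)
    have hg1 : g 1 = L (splice d l hld (x + z) y) := by
      rw [hg]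
      simp only
      rw [splice_add_smul d l hld x z y 1, one_smul]
    have hg0 : g 0 = L (splice d l hld x y) := by
      rw [hg]
      simp
    rw [hg1, hg0] at hMVT
    refine hMVT.trans ?_
    -- now bound C by the RHS
    rw [hC, Finset.mul_sum]
    apply Finset.sum_le_sum
    intro j _
    -- termwise bound
    have hz1 : |z j| ≤ |z j| ^ p j := by
      rcases eq_or_lt_of_le (abs_nonneg (z j)) with h0 | h0
      · rw [← h0, Real.zero_rpow (hp j).1.ne']
      · calc |z j| = |z j| ^ (1:ℝ) := (Real.rpow_one _).symm
          _ ≤ |z j| ^ p j :=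
            Real.rpow_le_rpow_of_exponent_ge h0 (hcase j).le (hp j).2.le
    have hfac : (1 + (‖x‖ + 1) ^ γ j) * u y ≤
        K * u y * (1 + ∑ i : Fin l, ‖x‖ ^ γ i) := by
      have hstep : (‖x‖ + 1) ^ γ j ≤ (2:ℝ) ^ γ j * (1 + ‖x‖ ^ γ j) := by
        have hmax : ‖x‖ + 1 ≤ 2 * max 1 ‖x‖ := by
          rcases le_total ‖x‖ 1 with h | h
          · simp [max_eq_left h]; linarith
          · rw [max_eq_right h]; linarith
        calc (‖x‖ + 1) ^ γ j ≤ (2 * max 1 ‖x‖) ^ γ j :=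
              Real.rpow_le_rpow (by positivity) hmax (hγ j)
          _ = (2:ℝ) ^ γ j * (max 1 ‖x‖) ^ γ j :=
              Real.mul_rpow (by norm_num) (by positivity)
          _ ≤ (2:ℝ) ^ γ j * (1 + ‖x‖ ^ γ j) := by
              apply mul_le_mul_of_nonneg_left _ (Real.rpow_nonneg (by norm_num) _)
              rcases le_total ‖x‖ 1 with h | h
              · rw [max_eq_left h, Real.one_rpow]
                have := Real.rpow_nonneg (norm_nonneg x) (γ j)
                linarith
              · rw [max_eq_right h]
                linarith [Real.rpow_nonneg (norm_nonneg x) (γ j),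
                  (by norm_num : (0:ℝ) ≤ 1)]
      have h2γ : (0:ℝ) < (2:ℝ) ^ γ j := Real.rpow_pos_of_pos two_pos _
      have hxγ : (0:ℝ) ≤ ‖x‖ ^ γ j := Real.rpow_nonneg (norm_nonneg x) _
      have hterm : ‖x‖ ^ γ j ≤ ∑ i : Fin l, ‖x‖ ^ γ i :=
        Finset.single_le_sum (fun i _ => Real.rpow_nonneg (norm_nonneg x) _)
          (Finset.mem_univ j)
      have hKj : 1 + (2:ℝ) ^ γ j ≤ K := by
        rw [hK]
        have : (2:ℝ) ^ γ j ≤ ∑ i : Fin l, (2:ℝ) ^ γ i :=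
          Finset.single_le_sum (fun i _ => (Real.rpow_pos_of_pos two_pos _).le)
            (Finset.mem_univ j)
        linarith
      have key : 1 + (‖x‖ + 1) ^ γ j ≤ K * (1 + ∑ i : Fin l, ‖x‖ ^ γ i) := by
        calc 1 + (‖x‖ + 1) ^ γ j ≤ 1 + (2:ℝ) ^ γ j * (1 + ‖x‖ ^ γ j) := by linarith
          _ ≤ (1 + (2:ℝ) ^ γ j) * (1 + ‖x‖ ^ γ j) := by nlinarith
          _ ≤ K * (1 + ∑ i : Fin l, ‖x‖ ^ γ i) := by
              apply mul_le_mul hKj (by linarith) (by linarith) hKpos.le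
      calc (1 + (‖x‖ + 1) ^ γ j) * u y ≤ K * (1 + ∑ i : Fin l, ‖x‖ ^ γ i) * u y :=
            mul_le_mul_of_nonneg_right key (hu_nonneg y)
        _ = K * u y * (1 + ∑ i : Fin l, ‖x‖ ^ γ i) := by ring
    calc |z j| * ((1 + (‖x‖ + 1) ^ γ j) * u y)
        ≤ |z j| ^ p j * (K * u y * (1 + ∑ i : Fin l, ‖x‖ ^ γ i)) := by
          apply mul_le_mul hz1 hfac
            (mul_nonneg (add_nonneg zero_le_one (Real.rpow_nonneg (by positivity) _)) (hu_nonneg y))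
            (Real.rpow_nonneg (abs_nonneg _) _)
      _ = K * u y * (1 + ∑ i : Fin l, ‖x‖ ^ γ i) * |z j| ^ p j := by ring
end
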